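/- Fix c ∈ (0,1), α > 0 and β > −1, and for integers k ≥ 0 and n ≥ 1 define p_k(x;n) = (−1)^k c^{−k/(2n)} J_{2nα+β}(x c^{−k/(2n)}; c^{1/n}), where J denotes the Hahn–Exton q-Bessel function with base q = c^{1/n}. Then there exists a constant C > 0 such that |p_{k−1}(x;n)| · dist(x,ℝ) ≤ C · |p_k(x;n)| for all integers k, n ≥ 1 and all x ∈ ℂ∖ℝ. -/

import Mathlib

open Complex Filter

noncomputable def qPoch (q a : ℂ) (k : ℕ) : ℂ := ∏ i ∈ Finset.range k, (1 - a * q ^ i)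

noncomputable def qPochInf (q a : ℂ) : ℂ := ∏' i : ℕ, (1 - a * q ^ i)

noncomputable def Jser (q : ℝ) (ν z : ℂ) : ℂ :=
  z ^ ν * (qPochInf (q : ℂ) ((q : ℂ) ^ (ν + 1)) / qPochInf (q : ℂ) (q : ℂ)) *
    ∑' k : ℕ, ((-1 : ℂ) ^ k * (q : ℂ) ^ (k * (k + 1) / 2) * z ^ (2 * k)) /
      (qPoch (q : ℂ) (q : ℂ) k * qPoch (q : ℂ) ((q : ℂ) ^ (ν + 1)) k)

open scoped Classical in
noncomputable def JHE (q : ℝ) (ν z : ℂ) : ℂ :=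
  if h : ∃ n : ℕ, ν = -((n : ℂ) + 1) then
    let n : ℕ := h.choose + 1
    (-1 : ℂ) ^ n * (q : ℂ) ^ ((n : ℂ) / 2) * Jser q (n : ℂ) (z * (q : ℂ) ^ ((n : ℂ) / 2))
  else Jser q ν z

/-- p_k(x;n) = (−1)^k c^{−k/2n} J_{2nα+β}(x c^{−k/2n}; c^{1/n}). -/
noncomputable def pHE (c α β : ℝ) (k n : ℕ) (x : ℂ) : ℂ :=
  (-1 : ℂ) ^ k * (c : ℂ) ^ (-(k : ℂ) / (2 * (n : ℂ))) *
    JHE (c ^ ((1 : ℝ) / (n : ℝ))) ((2 * (n : ℝ) * α + β : ℝ) : ℂ)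
      (x * (c : ℂ) ^ (-(k : ℂ) / (2 * (n : ℂ))))

/-! Write `q = c^{1/n}`, `ν = 2nα + β` and `J_ν(z;q) = z^ν K φ(z²)`, so that
`p_k(x;n) = x^ν K Q_k` with `Q_j = (-1)^j q^{-j(ν+1)/2} φ(x² q^{-j})` for `j ∈ ℤ`.
The q-difference equation of `φ` says that `Q` and `R_j = (a_j Q_j + b_j Q_{j-1}) / x`, where
`a_j = q^{(j+ν)/2}` and `b_j = q^{(j-1)/2}`, solve the symmetric bidiagonal system
`x R_j = a_j Q_j + b_j Q_{j-1}`, `x Q_{j-1} = b_j R_j + a_{j-1} R_{j-1}`.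
Its Casorati determinant `G_j = a_j Im(Q_j conj R_j)` satisfies
`G_j - G_{j-1} = Im x (|R_j|² + |Q_{j-1}|²)` and tends to `0` as `j → -∞`, because
`φ(w) - φ(qw) = O(w)` cancels the growth of the weights. Hence `Im x · G_j ≥ 0`, so
`|Im x| (|R_j|² + |Q_{j-1}|²) ≤ |G_j| ≤ a_j |Q_j| |R_j|`, and AM–GM gives
`|Im x| |Q_{k-1}| ≤ a_k |Q_k| / 2 ≤ |Q_k|`: the estimate holds with `C = 1`. -/

open Topology

lemma ofReal_rpow_mul_ofReal_rpow {q e f g : ℝ} (hq : 0 < q) (h : e + f = g) :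
    ((q ^ e : ℝ) : ℂ) * ((q ^ f : ℝ) : ℂ) = ((q ^ g : ℝ) : ℂ) := by
  rw [← Complex.ofReal_mul, ← Real.rpow_add hq, h]

lemma norm_neg_one_zpow_mul_ofReal_rpow {q : ℝ} (hq : 0 < q) (e : ℝ) (j : ℤ) :
    ‖(-1 : ℂ) ^ j * ((q ^ e : ℝ) : ℂ)‖ = q ^ e := by
  rw [norm_mul, norm_zpow, norm_neg, norm_one, one_zpow, one_mul,
    Complex.norm_of_nonneg (Real.rpow_nonneg hq.le e)]

lemma norm_ofReal_rpow_lt_one {q e : ℝ} (hq0 : 0 < q) (hq1 : q < 1) (he : 0 < e) :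
    ‖((q ^ e : ℝ) : ℂ)‖ < 1 := by
  rw [Complex.norm_of_nonneg (by positivity)]
  exact Real.rpow_lt_one hq0.le hq1 he

lemma neg_one_zpow_sub_one (j : ℤ) : (-1 : ℂ) ^ (j - 1) = -(-1) ^ j := by
  rw [zpow_sub_one₀ (by norm_num)]; ring

lemma im_mul_conj_swap (z w : ℂ) : (z * starRingEnd ℂ w).im = -(w * starRingEnd ℂ z).im := by
  rw [← Complex.conj_im, map_mul, Complex.conj_conj, mul_comm]

lemma im_mul_mul_conj (x z : ℂ) : (x * z * starRingEnd ℂ z).im = x.im * Complex.normSq z := by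
  rw [mul_assoc, Complex.mul_conj, Complex.im_mul_ofReal]

lemma Complex.mul_ofReal_cpow {r : ℝ} (hr : 0 < r) (x s : ℂ) :
    (x * r) ^ s = x ^ s * (r : ℂ) ^ s := by
  have hr' : (r : ℂ) ≠ 0 := Complex.ofReal_ne_zero.2 hr.ne'
  rcases eq_or_ne x 0 with rfl | hx
  · rcases eq_or_ne s 0 with rfl | hs <;> simp [*]
  rw [Complex.cpow_def_of_ne_zero (mul_ne_zero hx hr'), Complex.log_mul_ofReal r hr x hx,
    Complex.cpow_def_of_ne_zero hx, Complex.cpow_def_of_ne_zero hr', ← Complex.exp_add,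
    Complex.ofReal_log hr.le]
  ring_nf

lemma tendsto_rpow_neg_intCast_mul_atBot {q κ : ℝ} (hq0 : 0 < q) (hq1 : q < 1) (hκ : 0 < κ) :
    Tendsto (fun j : ℤ => q ^ (-(j : ℝ) * κ)) atBot (𝓝 0) :=
  (tendsto_rpow_atTop_of_base_lt_one q (by linarith) hq1).comp <|
    (tendsto_neg_atBot_atTop.comp (tendsto_intCast_atBot_iff.2 tendsto_id)).atTop_mul_const hκ

lemma summable_norm_mul_pow_of_norm_succ_le {c : ℕ → ℂ} {ε : ℕ → ℝ}
    (hε : Tendsto ε atTop (𝓝 0)) (hc : ∀ m, ‖c (m + 1)‖ ≤ ε m * ‖c m‖) (w : ℂ) :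
    Summable fun m => ‖c m * w ^ m‖ := by
  refine summable_of_ratio_norm_eventually_le (r := 1 / 2) (by norm_num) ?_
  have hsmall : ∀ᶠ m in atTop, ε m * ‖w‖ ≤ 1 / 2 := by
    have := hε.mul_const ‖w‖
    rw [zero_mul] at this
    exact this.eventually (eventually_le_nhds (by norm_num))
  filter_upwards [hsmall] with m hm
  simp only [norm_norm, norm_mul, norm_pow]
  calc ‖c (m + 1)‖ * ‖w‖ ^ (m + 1) ≤ ε m * ‖c m‖ * ‖w‖ ^ (m + 1) := by gcongr; exact hc m
    _ = ε m * ‖w‖ * (‖c m‖ * ‖w‖ ^ m) := by ring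
    _ ≤ 1 / 2 * (‖c m‖ * ‖w‖ ^ m) := by gcongr

lemma qPoch_succ (q a : ℂ) (m : ℕ) : qPoch q a (m + 1) = qPoch q a m * (1 - a * q ^ m) :=
  Finset.prod_range_succ _ _

section QBesselSeries

variable {q : ℝ} {a : ℂ}

lemma one_sub_norm_le_norm_one_sub_mul_pow (hq0 : 0 ≤ q) (hq1 : q ≤ 1) (a : ℂ) (i : ℕ) :
    1 - ‖a‖ ≤ ‖1 - a * (q : ℂ) ^ i‖ := by
  have hqi : ‖a * (q : ℂ) ^ i‖ ≤ ‖a‖ := by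
    rw [norm_mul, norm_pow, Complex.norm_real, Real.norm_of_nonneg hq0]
    exact mul_le_of_le_one_right (norm_nonneg a) (pow_le_one₀ hq0 hq1)
  have := norm_sub_norm_le (1 : ℂ) (a * (q : ℂ) ^ i)
  rw [norm_one] at this
  linarith

lemma one_sub_mul_pow_ne_zero (hq0 : 0 ≤ q) (hq1 : q ≤ 1) (ha : ‖a‖ < 1) (i : ℕ) :
    1 - a * (q : ℂ) ^ i ≠ 0 :=
  norm_pos_iff.1 ((sub_pos.2 ha).trans_le (one_sub_norm_le_norm_one_sub_mul_pow hq0 hq1 a i))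

lemma qPoch_ne_zero (hq0 : 0 ≤ q) (hq1 : q ≤ 1) (ha : ‖a‖ < 1) (m : ℕ) : qPoch q a m ≠ 0 :=
  Finset.prod_ne_zero_iff.2 fun i _ => one_sub_mul_pow_ne_zero hq0 hq1 ha i

noncomputable def qBesselCoeff (q : ℝ) (a : ℂ) (m : ℕ) : ℂ :=
  (-1) ^ m * (q : ℂ) ^ (m * (m + 1) / 2) / (qPoch q q m * qPoch q a m)

noncomputable def qBesselSeries (q : ℝ) (a w : ℂ) : ℂ := ∑' m, qBesselCoeff q a m * w ^ m

lemma qBesselCoeff_zero : qBesselCoeff q a 0 = 1 := by simp [qBesselCoeff, qPoch]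

lemma qBesselCoeff_succ_mul (hq0 : 0 < q) (hq1 : q < 1) (ha : ‖a‖ < 1) (m : ℕ) :
    qBesselCoeff q a (m + 1) * ((1 - q * q ^ m) * (1 - a * q ^ m)) =
      -(q : ℂ) ^ (m + 1) * qBesselCoeff q a m := by
  have hqq : ‖(q : ℂ)‖ < 1 := by rwa [Complex.norm_real, Real.norm_of_nonneg hq0.le]
  have htri : (m + 1) * (m + 1 + 1) / 2 = m * (m + 1) / 2 + (m + 1) := by
    rw [show (m + 1) * (m + 1 + 1) = m * (m + 1) + (m + 1) * 2 by ring,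
      Nat.add_mul_div_right _ _ two_pos]
  have := qPoch_ne_zero hq0.le hq1.le hqq m
  have := qPoch_ne_zero hq0.le hq1.le ha m
  have := one_sub_mul_pow_ne_zero hq0.le hq1.le hqq m
  have := one_sub_mul_pow_ne_zero hq0.le hq1.le ha m
  rw [qBesselCoeff, qBesselCoeff, qPoch_succ, qPoch_succ, htri, div_mul_eq_mul_div,
    div_eq_iff (by simp [*])]
  field_simp
  ring

lemma norm_qBesselCoeff_succ_le (hq0 : 0 < q) (hq1 : q < 1) (ha : ‖a‖ < 1) (m : ℕ) :
    ‖qBesselCoeff q a (m + 1)‖ ≤ q ^ (m + 1) / ((1 - q) * (1 - ‖a‖)) * ‖qBesselCoeff q a m‖ := by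
  have hrec := congrArg norm (qBesselCoeff_succ_mul hq0 hq1 ha m)
  simp only [norm_mul, norm_neg, norm_pow, Complex.norm_real, Real.norm_of_nonneg hq0.le] at hrec
  have hq := one_sub_norm_le_norm_one_sub_mul_pow hq0.le hq1.le (q : ℂ) m
  rw [Complex.norm_real, Real.norm_of_nonneg hq0.le] at hq
  have ha' := one_sub_norm_le_norm_one_sub_mul_pow hq0.le hq1.le a m
  rw [div_mul_eq_mul_div, le_div_iff₀ (by nlinarith), ← hrec]
  gcongr

lemma summable_norm_qBesselCoeff_mul_pow (hq0 : 0 < q) (hq1 : q < 1) (ha : ‖a‖ < 1) (w : ℂ) :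
    Summable fun m => ‖qBesselCoeff q a m * w ^ m‖ := by
  refine summable_norm_mul_pow_of_norm_succ_le ?_ (norm_qBesselCoeff_succ_le hq0 hq1 ha) w
  simpa [pow_succ, mul_div_assoc] using
    ((tendsto_pow_atTop_nhds_zero_of_lt_one hq0.le hq1).mul_const
      (q / ((1 - q) * (1 - ‖a‖))))

theorem exists_norm_qBesselSeries_sub_one_le (hq0 : 0 < q) (hq1 : q < 1) (ha : ‖a‖ < 1) :
    ∃ S, 0 ≤ S ∧ ∀ w : ℂ, ‖w‖ ≤ 1 → ‖qBesselSeries q a w - 1‖ ≤ S * ‖w‖ := by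
  have hS : Summable fun m => ‖qBesselCoeff q a (m + 1)‖ := by
    simpa using (summable_nat_add_iff 1).2 (summable_norm_qBesselCoeff_mul_pow hq0 hq1 ha 1)
  refine ⟨∑' m, ‖qBesselCoeff q a (m + 1)‖, tsum_nonneg fun _ => norm_nonneg _, fun w hw => ?_⟩
  have hs := summable_norm_qBesselCoeff_mul_pow hq0 hq1 ha w
  have hs' := (summable_nat_add_iff 1).2 hs
  rw [qBesselSeries, hs.of_norm.tsum_eq_zero_add, qBesselCoeff_zero, pow_zero, mul_one,
    add_sub_cancel_left, ← tsum_mul_right]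
  refine (norm_tsum_le_tsum_norm hs').trans (hs'.tsum_le_tsum (fun m => ?_) (hS.mul_right _))
  rw [norm_mul, norm_pow]
  gcongr
  exact pow_le_of_le_one (norm_nonneg w) hw m.succ_ne_zero

theorem exists_norm_qBesselSeries_le (hq0 : 0 < q) (hq1 : q < 1) (ha : ‖a‖ < 1) :
    ∃ S, ∀ w : ℂ, ‖w‖ ≤ 1 → ‖qBesselSeries q a w‖ ≤ S ∧
      ‖qBesselSeries q a w - qBesselSeries q a (q * w)‖ ≤ S * ‖w‖ := by
  obtain ⟨S, hS, hφ⟩ := exists_norm_qBesselSeries_sub_one_le hq0 hq1 ha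
  refine ⟨2 * S + 1, fun w hw => ⟨?_, ?_⟩⟩
  · have := norm_le_norm_add_norm_sub' (qBesselSeries q a w) 1
    rw [norm_one] at this
    nlinarith [hφ w hw]
  · have hqw : ‖(q : ℂ) * w‖ ≤ ‖w‖ := by
      rw [norm_mul, Complex.norm_of_nonneg hq0.le]
      exact mul_le_of_le_one_left (norm_nonneg w) hq1.le
    have := norm_sub_le_norm_sub_add_norm_sub (qBesselSeries q a w) 1 (qBesselSeries q a (q * w))
    rw [norm_sub_rev 1] at this
    nlinarith [hφ w hw, hφ _ (hqw.trans hw), norm_nonneg w]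

theorem qBesselSeries_qDifference (hq0 : 0 < q) (hq1 : q < 1) (ha : ‖a‖ < 1) (w : ℂ) :
    q * (qBesselSeries q a w - qBesselSeries q a (q * w)) =
      a * (qBesselSeries q a (q * w) - qBesselSeries q a (q ^ 2 * w)) -
        q ^ 2 * w * qBesselSeries q a (q * w) := by
  have hsum (v : ℂ) : HasSum (fun m => qBesselCoeff q a m * v ^ m) (qBesselSeries q a v) :=
    (summable_norm_qBesselCoeff_mul_pow hq0 hq1 ha v).of_norm.hasSum
  have hlhs := ((hsum w).sub (hsum (q * w))).mul_left (q : ℂ) |>.sub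
    (((hsum (q * w)).sub (hsum (q ^ 2 * w))).mul_left a)
  have hshift (m : ℕ) :
      q * (qBesselCoeff q a (m + 1) * w ^ (m + 1) - qBesselCoeff q a (m + 1) * (q * w) ^ (m + 1)) -
        a * (qBesselCoeff q a (m + 1) * (q * w) ^ (m + 1) -
          qBesselCoeff q a (m + 1) * (q ^ 2 * w) ^ (m + 1)) =
        -(q ^ 2 * w) * (qBesselCoeff q a m * (q * w) ^ m) := by
    linear_combination ((q : ℂ) * w ^ (m + 1)) * qBesselCoeff_succ_mul hq0 hq1 ha m
  have hrhs := (hasSum_nat_add_iff' 1).2 hlhs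
  simp only [hshift, Finset.sum_range_one, pow_zero, mul_one, sub_self, mul_zero, sub_zero] at hrhs
  linear_combination hrhs.unique ((hsum (q * w)).mul_left (-(q ^ 2 * w)))

end QBesselSeries

noncomputable def casorati (a : ℤ → ℝ) (Q R : ℤ → ℂ) (j : ℤ) : ℝ :=
  a j * (Q j * starRingEnd ℂ (R j)).im

section BidiagonalSystem

variable {x : ℂ} {a b : ℤ → ℝ} {Q R : ℤ → ℂ}

lemma abs_casorati_le {j : ℤ} (ha : 0 ≤ a j) :
    |casorati a Q R j| ≤ a j * ‖Q j‖ * ‖R j‖ := by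
  rw [casorati, abs_mul, abs_of_nonneg ha, mul_assoc]
  gcongr
  simpa using Complex.abs_im_le_norm (Q j * starRingEnd ℂ (R j))

theorem casorati_sub_casorati_sub_one {j : ℤ} (hR : x * R j = a j * Q j + b j * Q (j - 1))
    (hQ : x * Q (j - 1) = b j * R j + a (j - 1) * R (j - 1)) :
    casorati a Q R j - casorati a Q R (j - 1) =
      x.im * (Complex.normSq (R j) + Complex.normSq (Q (j - 1))) := by
  have hRR := im_mul_mul_conj x (R j)
  have hQQ := im_mul_mul_conj x (Q (j - 1))
  rw [hR] at hRR
  rw [hQ] at hQQ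
  simp only [casorati, add_mul, Complex.add_im, mul_assoc, Complex.im_ofReal_mul] at hRR hQQ ⊢
  linear_combination hRR + hQQ - b j * im_mul_conj_swap (Q (j - 1)) (R j) -
    a (j - 1) * im_mul_conj_swap (Q (j - 1)) (R (j - 1))

theorem im_mul_casorati_nonneg (hR : ∀ j, x * R j = a j * Q j + b j * Q (j - 1))
    (hQ : ∀ j, x * Q (j - 1) = b j * R j + a (j - 1) * R (j - 1))
    (hlim : Tendsto (casorati a Q R) atBot (𝓝 0)) (j : ℤ) : 0 ≤ x.im * casorati a Q R j := by
  have hmono : Monotone fun j => x.im * casorati a Q R j := by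
    refine monotone_int_of_le_succ fun j => ?_
    have h := casorati_sub_casorati_sub_one (hR (j + 1)) (hQ (j + 1))
    rw [add_sub_cancel_right] at h
    have hsq : x.im * casorati a Q R (j + 1) - x.im * casorati a Q R j =
        x.im * x.im * (Complex.normSq (R (j + 1)) + Complex.normSq (Q j)) := by
      rw [← mul_sub, h, mul_assoc]
    linarith [mul_nonneg (mul_self_nonneg x.im)
      (add_nonneg (Complex.normSq_nonneg (R (j + 1))) (Complex.normSq_nonneg (Q j)))]
  simpa using hmono.le_of_tendsto (by simpa using hlim.const_mul x.im) j

theorem abs_im_mul_norm_sub_one_le (hR : ∀ j, x * R j = a j * Q j + b j * Q (j - 1))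
    (hQ : ∀ j, x * Q (j - 1) = b j * R j + a (j - 1) * R (j - 1))
    (hlim : Tendsto (casorati a Q R) atBot (𝓝 0)) (hx : x.im ≠ 0) {j : ℤ} (ha : 0 ≤ a j) :
    |x.im| * ‖Q (j - 1)‖ ≤ a j * ‖Q j‖ / 2 := by
  have hstep := casorati_sub_casorati_sub_one (hR j) (hQ j)
  have hprev := im_mul_casorati_nonneg hR hQ hlim (j - 1)
  have hxpos : 0 < |x.im| := abs_pos.2 hx
  rw [Complex.normSq_eq_norm_sq, Complex.normSq_eq_norm_sq] at hstep
  have hquad : |x.im| * (‖R j‖ ^ 2 + ‖Q (j - 1)‖ ^ 2) ≤ a j * ‖Q j‖ * ‖R j‖ := by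
    refine le_of_mul_le_mul_left ?_ hxpos
    calc |x.im| * (|x.im| * (‖R j‖ ^ 2 + ‖Q (j - 1)‖ ^ 2))
        = x.im * (casorati a Q R j - casorati a Q R (j - 1)) := by
          rw [hstep, ← mul_assoc, ← mul_assoc, abs_mul_abs_self]
      _ ≤ |x.im| * |casorati a Q R j| := by
          rw [← abs_mul]; linarith [le_abs_self (x.im * casorati a Q R j)]
      _ ≤ |x.im| * (a j * ‖Q j‖ * ‖R j‖) := by gcongr; exact abs_casorati_le ha
  -- AM–GM: `a_j ‖Q_j‖ ‖R_j‖ - |Im x| ‖R_j‖² ≤ (a_j ‖Q_j‖)² / (4 |Im x|)`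
  nlinarith [sq_nonneg (2 * |x.im| * ‖R j‖ - a j * ‖Q j‖), norm_nonneg (Q (j - 1)),
    mul_nonneg ha (norm_nonneg (Q j))]

end BidiagonalSystem

section HahnExtonSequence

variable {q ν : ℝ}

noncomputable def scaledBessel (q ν : ℝ) (x : ℂ) (j : ℤ) : ℂ :=
  qBesselSeries q ((q ^ (ν + 1) : ℝ) : ℂ) (x ^ 2 * ((q ^ (-(j : ℝ)) : ℝ) : ℂ))

noncomputable def pSeq (q ν : ℝ) (x : ℂ) (j : ℤ) : ℂ :=
  (-1) ^ j * ((q ^ (-(j : ℝ) * (ν + 1) / 2) : ℝ) : ℂ) * scaledBessel q ν x j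

-- This is `(a_j Q_j + b_j Q_{j-1}) / x`: both weights collapse to `q^{ν(1-j)/2}`.
noncomputable def pCompanion (q ν : ℝ) (x : ℂ) (j : ℤ) : ℂ :=
  (-1) ^ j * ((q ^ (ν * (1 - j) / 2) : ℝ) : ℂ) *
    (scaledBessel q ν x j - scaledBessel q ν x (j - 1)) / x

lemma sq_mul_rpow_neg_intCast_sub_one (hq : 0 < q) (x : ℂ) (j : ℤ) :
    x ^ 2 * ((q ^ (-((j - 1 : ℤ) : ℝ)) : ℝ) : ℂ) = q * (x ^ 2 * ((q ^ (-(j : ℝ)) : ℝ) : ℂ)) := by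
  have hshift : (q : ℂ) * ((q ^ (-(j : ℝ)) : ℝ) : ℂ) = ((q ^ (-((j - 1 : ℤ) : ℝ)) : ℝ) : ℂ) := by
    simpa using ofReal_rpow_mul_ofReal_rpow hq (e := 1) (f := -(j : ℝ)) (g := -((j - 1 : ℤ) : ℝ))
      (by push_cast; ring)
  rw [mul_left_comm, hshift]

theorem scaledBessel_sub_scaledBessel_sub_one (hq0 : 0 < q) (hq1 : q < 1) (hν : -1 < ν)
    (x : ℂ) (j : ℤ) :
    scaledBessel q ν x j - scaledBessel q ν x (j - 1) =
      (q ^ ν : ℝ) * (scaledBessel q ν x (j - 1) - scaledBessel q ν x (j - 1 - 1)) -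
        x ^ 2 * ((q ^ (-((j - 1 : ℤ) : ℝ)) : ℝ) : ℂ) * scaledBessel q ν x (j - 1) := by
  have ha := norm_ofReal_rpow_lt_one hq0 hq1 (neg_lt_iff_pos_add.1 hν)
  have hqd := qBesselSeries_qDifference hq0 hq1 ha (x ^ 2 * ((q ^ (-(j : ℝ)) : ℝ) : ℂ))
  have hA : ((q ^ (ν + 1) : ℝ) : ℂ) = q * (q ^ ν : ℝ) := by
    rw [Real.rpow_add_one hq0.ne', mul_comm, Complex.ofReal_mul]
  simp only [scaledBessel, sq_mul_rpow_neg_intCast_sub_one hq0]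
  rw [pow_two (q : ℂ), mul_assoc] at hqd
  set φ := qBesselSeries q ((q ^ (ν + 1) : ℝ) : ℂ)
  set w := x ^ 2 * ((q ^ (-(j : ℝ)) : ℝ) : ℂ)
  apply mul_left_cancel₀ (Complex.ofReal_ne_zero.2 hq0.ne')
  linear_combination hqd + (φ (q * w) - φ (q * (q * w))) * hA

lemma mul_pCompanion (x : ℂ) (hx : x ≠ 0) (j : ℤ) :
    x * pCompanion q ν x j = (-1) ^ j * ((q ^ (ν * (1 - j) / 2) : ℝ) : ℂ) *
      (scaledBessel q ν x j - scaledBessel q ν x (j - 1)) :=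
  mul_div_cancel₀ _ hx

theorem mul_pCompanion_eq_add (hq : 0 < q) {x : ℂ} (hx : x ≠ 0) (j : ℤ) :
    x * pCompanion q ν x j = (q ^ (((j : ℝ) + ν) / 2) : ℝ) * pSeq q ν x j +
      (q ^ (((j : ℝ) - 1) / 2) : ℝ) * pSeq q ν x (j - 1) := by
  have hA : ((q ^ (((j : ℝ) + ν) / 2) : ℝ) : ℂ) * ((q ^ (-(j : ℝ) * (ν + 1) / 2) : ℝ) : ℂ) =
      ((q ^ (ν * (1 - j) / 2) : ℝ) : ℂ) :=
    ofReal_rpow_mul_ofReal_rpow hq (by ring)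
  have hB : ((q ^ (((j : ℝ) - 1) / 2) : ℝ) : ℂ) *
      ((q ^ (-((j - 1 : ℤ) : ℝ) * (ν + 1) / 2) : ℝ) : ℂ) = ((q ^ (ν * (1 - j) / 2) : ℝ) : ℂ) :=
    ofReal_rpow_mul_ofReal_rpow hq (by push_cast; ring)
  rw [mul_pCompanion x hx, pSeq, pSeq, neg_one_zpow_sub_one]
  linear_combination (-1 : ℂ) ^ j * scaledBessel q ν x (j - 1) * hB -
    (-1 : ℂ) ^ j * scaledBessel q ν x j * hA

theorem mul_pSeq_sub_one_eq_add (hq0 : 0 < q) (hq1 : q < 1) (hν : -1 < ν) {x : ℂ} (hx : x ≠ 0)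
    (j : ℤ) :
    x * pSeq q ν x (j - 1) = (q ^ (((j : ℝ) - 1) / 2) : ℝ) * pCompanion q ν x j +
      (q ^ ((((j - 1 : ℤ) : ℝ) + ν) / 2) : ℝ) * pCompanion q ν x (j - 1) := by
  have hrec := scaledBessel_sub_scaledBessel_sub_one hq0 hq1 hν x j
  have hRj := mul_pCompanion (q := q) (ν := ν) x hx j
  have hRj' := mul_pCompanion (q := q) (ν := ν) x hx (j - 1)
  -- Multiplied by `x`, the claim is `-(-1)^j β` times `hrec`.
  set β : ℂ := ((q ^ (((j : ℝ) - 1) * (1 - ν) / 2) : ℝ) : ℂ)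
  have h1 : ((q ^ (((j : ℝ) - 1) / 2) : ℝ) : ℂ) * ((q ^ (ν * (1 - j) / 2) : ℝ) : ℂ) = β :=
    ofReal_rpow_mul_ofReal_rpow hq0 (by ring)
  have h2 : ((q ^ ((((j - 1 : ℤ) : ℝ) + ν) / 2) : ℝ) : ℂ) *
      ((q ^ (ν * (1 - ((j - 1 : ℤ) : ℝ)) / 2) : ℝ) : ℂ) = ((q ^ ν : ℝ) : ℂ) * β := by
    rw [ofReal_rpow_mul_ofReal_rpow hq0 (g := ν + ((j : ℝ) - 1) * (1 - ν) / 2) (by push_cast; ring)]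
    exact (ofReal_rpow_mul_ofReal_rpow hq0 rfl).symm
  have h3 : β * ((q ^ (-((j - 1 : ℤ) : ℝ)) : ℝ) : ℂ) =
      ((q ^ (-((j - 1 : ℤ) : ℝ) * (ν + 1) / 2) : ℝ) : ℂ) :=
    ofReal_rpow_mul_ofReal_rpow hq0 (by push_cast; ring)
  apply mul_left_cancel₀ hx
  rw [pSeq]
  rw [neg_one_zpow_sub_one] at hRj' ⊢
  linear_combination -(q ^ (((j : ℝ) - 1) / 2) : ℝ) * hRj -
    (q ^ ((((j - 1 : ℤ) : ℝ) + ν) / 2) : ℝ) * hRj' -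
    (-1) ^ j * (scaledBessel q ν x j - scaledBessel q ν x (j - 1)) * h1 +
    (-1) ^ j * (scaledBessel q ν x (j - 1) - scaledBessel q ν x (j - 1 - 1)) * h2 +
    x ^ 2 * (-1) ^ j * scaledBessel q ν x (j - 1) * h3 - (-1) ^ j * β * hrec

theorem abs_casorati_pSeq_le (hq0 : 0 < q) {S : ℝ}
    (hφ : ∀ w : ℂ, ‖w‖ ≤ 1 → ‖qBesselSeries q ((q ^ (ν + 1) : ℝ) : ℂ) w‖ ≤ S ∧
      ‖qBesselSeries q ((q ^ (ν + 1) : ℝ) : ℂ) w -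
        qBesselSeries q ((q ^ (ν + 1) : ℝ) : ℂ) (q * w)‖ ≤ S * ‖w‖)
    {x : ℂ} (hx : x ≠ 0) {j : ℤ} (hj : ‖x‖ ^ 2 * q ^ (-(j : ℝ)) ≤ 1) :
    |casorati (fun j => q ^ (((j : ℝ) + ν) / 2)) (pSeq q ν x) (pCompanion q ν x) j| ≤
      S * S * ‖x‖ * q ^ ν * q ^ (-(j : ℝ) * (ν + 1)) := by
  set w := x ^ 2 * ((q ^ (-(j : ℝ)) : ℝ) : ℂ)
  have hw : ‖w‖ = ‖x‖ ^ 2 * q ^ (-(j : ℝ)) := by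
    rw [norm_mul, norm_pow, Complex.norm_of_nonneg (by positivity)]
  obtain ⟨hφw, hΔ⟩ := hφ w (hw ▸ hj)
  have hS : 0 ≤ S := (norm_nonneg _).trans hφw
  have hQ : ‖pSeq q ν x j‖ =
      q ^ (-(j : ℝ) * (ν + 1) / 2) * ‖qBesselSeries q ((q ^ (ν + 1) : ℝ) : ℂ) w‖ := by
    rw [pSeq, norm_mul, norm_neg_one_zpow_mul_ofReal_rpow hq0]
    rfl
  have hR : ‖pCompanion q ν x j‖ = q ^ (ν * (1 - j) / 2) *
      ‖qBesselSeries q ((q ^ (ν + 1) : ℝ) : ℂ) w -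
        qBesselSeries q ((q ^ (ν + 1) : ℝ) : ℂ) (q * w)‖ / ‖x‖ := by
    rw [pCompanion, norm_div, norm_mul, norm_neg_one_zpow_mul_ofReal_rpow hq0]
    simp only [scaledBessel, sq_mul_rpow_neg_intCast_sub_one hq0]
    rfl
  have hexp : q ^ (((j : ℝ) + ν) / 2) * q ^ (-(j : ℝ) * (ν + 1) / 2) * q ^ (ν * (1 - j) / 2) *
      q ^ (-(j : ℝ)) = q ^ ν * q ^ (-(j : ℝ) * (ν + 1)) := by
    simp only [← Real.rpow_add hq0]
    ring_nf
  refine (abs_casorati_le (Real.rpow_nonneg hq0.le _)).trans ?_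
  calc q ^ (((j : ℝ) + ν) / 2) * ‖pSeq q ν x j‖ * ‖pCompanion q ν x j‖
      ≤ q ^ (((j : ℝ) + ν) / 2) * (q ^ (-(j : ℝ) * (ν + 1) / 2) * S) *
          (q ^ (ν * (1 - j) / 2) * (S * ‖w‖) / ‖x‖) := by
        rw [hQ, hR]
        gcongr
    _ = S * S * ‖x‖ * (q ^ (((j : ℝ) + ν) / 2) * q ^ (-(j : ℝ) * (ν + 1) / 2) *
          q ^ (ν * (1 - j) / 2) * q ^ (-(j : ℝ))) := by
        rw [hw]
        field_simp
    _ = S * S * ‖x‖ * q ^ ν * q ^ (-(j : ℝ) * (ν + 1)) := by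
        rw [hexp]
        ring

theorem tendsto_casorati_pSeq (hq0 : 0 < q) (hq1 : q < 1) (hν : -1 < ν) {x : ℂ} (hx : x ≠ 0) :
    Tendsto (casorati (fun j => q ^ (((j : ℝ) + ν) / 2)) (pSeq q ν x) (pCompanion q ν x))
      atBot (𝓝 0) := by
  have ha := norm_ofReal_rpow_lt_one hq0 hq1 (neg_lt_iff_pos_add.1 hν)
  obtain ⟨S, hφ⟩ := exists_norm_qBesselSeries_le hq0 hq1 ha
  have hsmall : ∀ᶠ j : ℤ in atBot, ‖x‖ ^ 2 * q ^ (-(j : ℝ)) ≤ 1 := by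
    have := (tendsto_rpow_neg_intCast_mul_atBot hq0 hq1 one_pos).const_mul (‖x‖ ^ 2)
    simp only [mul_one, mul_zero] at this
    exact this.eventually (eventually_le_nhds one_pos)
  have hdecay := (tendsto_rpow_neg_intCast_mul_atBot hq0 hq1 (neg_lt_iff_pos_add.1 hν)).const_mul
    (S * S * ‖x‖ * q ^ ν)
  rw [mul_zero] at hdecay
  refine squeeze_zero_norm' ?_ hdecay
  filter_upwards [hsmall] with j hj
  exact abs_casorati_pSeq_le hq0 hφ hx hj

theorem abs_im_mul_norm_pSeq_sub_one_le (hq0 : 0 < q) (hq1 : q < 1) (hν : -1 < ν) {x : ℂ}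
    (hx : x.im ≠ 0) (j : ℤ) :
    |x.im| * ‖pSeq q ν x (j - 1)‖ ≤ q ^ (((j : ℝ) + ν) / 2) * ‖pSeq q ν x j‖ / 2 := by
  have hx0 : x ≠ 0 := fun h => hx (by simp [h])
  exact abs_im_mul_norm_sub_one_le (mul_pCompanion_eq_add hq0 hx0)
    (mul_pSeq_sub_one_eq_add hq0 hq1 hν hx0) (tendsto_casorati_pSeq hq0 hq1 hν hx0) hx
    (Real.rpow_nonneg hq0.le _)

end HahnExtonSequence

lemma JHE_eq_Jser {ν : ℝ} (hν : -1 < ν) (q : ℝ) (z : ℂ) : JHE q ν z = Jser q ν z := by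
  refine dif_neg fun ⟨m, hm⟩ => ?_
  have : ν = -((m : ℝ) + 1) := by exact_mod_cast hm
  linarith [(Nat.cast_nonneg m : (0 : ℝ) ≤ m)]

lemma Jser_eq_mul_qBesselSeries (q : ℝ) (ν z : ℂ) :
    Jser q ν z = z ^ ν * (qPochInf q (q ^ (ν + 1)) / qPochInf q q) *
      qBesselSeries q ((q : ℂ) ^ (ν + 1)) (z ^ 2) := by
  rw [Jser, qBesselSeries]
  congr 1
  refine tsum_congr fun m => ?_
  rw [qBesselCoeff, ← pow_mul]
  ring

theorem exists_pHE_eq_mul_pSeq {c α β : ℝ} {n : ℕ} (hc : 0 < c) (hn : n ≠ 0)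
    (hν : -1 < 2 * n * α + β) (x : ℂ) :
    ∃ K : ℂ, ∀ k : ℕ, pHE c α β k n x = K * pSeq (c ^ ((1 : ℝ) / n)) (2 * n * α + β) x k := by
  set q := c ^ ((1 : ℝ) / n)
  set ν := 2 * n * α + β
  have hq : 0 < q := Real.rpow_pos_of_pos hc _
  refine ⟨x ^ (ν : ℂ) * (qPochInf q (q ^ ((ν : ℂ) + 1)) / qPochInf q q), fun k => ?_⟩
  have hσ0 : 0 < q ^ (-(k : ℝ) / 2) := Real.rpow_pos_of_pos hq _
  have hσ : (c : ℂ) ^ (-(k : ℂ) / (2 * n)) = ((q ^ (-(k : ℝ) / 2) : ℝ) : ℂ) := by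
    rw [← Real.rpow_mul hc.le, Complex.ofReal_cpow hc.le]
    congr 1
    push_cast
    field_simp
  have hA : (q : ℂ) ^ ((ν : ℂ) + 1) = ((q ^ (ν + 1) : ℝ) : ℂ) := by
    rw [Complex.ofReal_cpow hq.le]
    push_cast
    ring_nf
  have hσν : ((q ^ (-(k : ℝ) / 2) : ℝ) : ℂ) * ((q ^ (-(k : ℝ) / 2) : ℝ) : ℂ) ^ (ν : ℂ) =
      ((q ^ (-(k : ℝ) * (ν + 1) / 2) : ℝ) : ℂ) := by
    rw [← Complex.ofReal_cpow hσ0.le, ← Real.rpow_mul hq.le]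
    exact ofReal_rpow_mul_ofReal_rpow hq (by ring)
  have hσ2 : ((q ^ (-(k : ℝ) / 2) : ℝ) : ℂ) ^ 2 = ((q ^ (-((k : ℤ) : ℝ)) : ℝ) : ℂ) := by
    rw [sq]
    exact ofReal_rpow_mul_ofReal_rpow hq (by push_cast; ring)
  rw [pHE, hσ, JHE_eq_Jser hν, Jser_eq_mul_qBesselSeries, Complex.mul_ofReal_cpow hσ0, mul_pow,
    hσ2, pSeq, scaledBessel, hA, zpow_natCast]
  set K := qPochInf q ((q ^ (ν + 1) : ℝ) : ℂ) / qPochInf q q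
  set φ := qBesselSeries q ((q ^ (ν + 1) : ℝ) : ℂ) (x ^ 2 * ((q ^ (-((k : ℤ) : ℝ)) : ℝ) : ℂ))
  linear_combination (-1 : ℂ) ^ k * x ^ (ν : ℂ) * K * φ * hσν

/-- Lemma 4.2: the ratio estimate for the functions p_k(x;n). -/
theorem pHE_ratio_estimate (c α β : ℝ) (hc0 : 0 < c) (hc1 : c < 1)
    (hα : 0 < α) (hβ : -1 < β) :
    ∃ C : ℝ, 0 < C ∧ ∀ (k n : ℕ), 1 ≤ k → 1 ≤ n → ∀ x : ℂ, x.im ≠ 0 →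
      ‖pHE c α β (k - 1) n x‖ * |x.im| ≤ C * ‖pHE c α β k n x‖ := by
  refine ⟨1, one_pos, fun k n hk hn x hx => ?_⟩
  have hn' : (1 : ℝ) ≤ n := by exact_mod_cast hn
  have hk' : (1 : ℝ) ≤ k := by exact_mod_cast hk
  have hq0 : 0 < c ^ ((1 : ℝ) / n) := Real.rpow_pos_of_pos hc0 _
  have hq1 : c ^ ((1 : ℝ) / n) < 1 := Real.rpow_lt_one hc0.le hc1 (by positivity)
  have hν : -1 < 2 * (n : ℝ) * α + β := by nlinarith
  obtain ⟨K, hK⟩ := exists_pHE_eq_mul_pSeq hc0 (by omega) hν x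
  have hest := abs_im_mul_norm_pSeq_sub_one_le hq0 hq1 hν hx k
  have hweight : (c ^ ((1 : ℝ) / n)) ^ ((((k : ℤ) : ℝ) + (2 * n * α + β)) / 2) ≤ 1 :=
    Real.rpow_le_one hq0.le hq1.le (by push_cast; linarith)
  rw [hK, hK, show ((k - 1 : ℕ) : ℤ) = (k : ℤ) - 1 by omega, norm_mul, norm_mul]
  calc ‖K‖ * ‖pSeq _ _ x ((k : ℤ) - 1)‖ * |x.im|
      = ‖K‖ * (|x.im| * ‖pSeq _ _ x ((k : ℤ) - 1)‖) := by ring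
    _ ≤ ‖K‖ * ‖pSeq _ _ x k‖ := by
        gcongr
        nlinarith [norm_nonneg (pSeq (c ^ ((1 : ℝ) / n)) (2 * n * α + β) x k)]
    _ = 1 * (‖K‖ * ‖pSeq _ _ x k‖) := (one_mul _).symm
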